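/- Let A and B be finite Hopf C*-algebras and ⟨·,·⟩ : A × B → ℂ a non-degenerate bilinear form satisfying only the first three pairing axioms: ⟨Δ_A(a), b₁⊗b₂⟩ = ⟨a, b₁b₂⟩, ⟨a₁⊗a₂, Δ_B(b)⟩ = ⟨a₁a₂, b⟩, and ⟨a*, b⟩ = conj⟨a, S_B(b)*⟩. Then the counit axioms follow automatically: ⟨a, 1_B⟩ = ε_A(a) and ⟨1_A, b⟩ = ε_B(b) for all a ∈ A, b ∈ B. -/

import Mathlib

/-! Pairing `Δ_A a` against `b ⊗ 1` gives `⟨a, b⟩`, so by non-degeneracy `⟨·, 1⟩` is a right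
counit of `Δ_A`. A right and a left counit of the same comultiplication coincide, hence
`⟨·, 1⟩ = ε_A`; the same argument for the flipped pairing gives `⟨1, ·⟩ = ε_B`. -/

noncomputable section
open scoped TensorProduct
open TensorProduct LinearMap

namespace QD

/-! ### Componentwise star on tensor products of star modules over `ℂ` -/

section StarTensor

variable (A B : Type*) [AddCommGroup A] [AddCommGroup B] [Module ℂ A] [Module ℂ B]
  [StarAddMonoid A] [StarAddMonoid B] [StarModule ℂ A] [StarModule ℂ B]

/-- The componentwise star on a tensor product of star modules over `ℂ`. -/
def starAddHom : A ⊗[ℂ] B →+ A ⊗[ℂ] B :=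
  TensorProduct.liftAddHom
    { toFun := fun a =>
        { toFun := fun b => star a ⊗ₜ[ℂ] star b
          map_zero' := by simp
          map_add' := fun b₁ b₂ => by simp [star_add, TensorProduct.tmul_add] }
      map_zero' := by ext b; simp
      map_add' := fun a₁ a₂ => by ext b; simp [star_add, TensorProduct.add_tmul] }
    fun c a b => by simp [star_smul, TensorProduct.smul_tmul]

instance : StarAddMonoid (A ⊗[ℂ] B) where
  star x := starAddHom A B x
  star_involutive x := by
    show starAddHom A B (starAddHom A B x) = x
    induction x using TensorProduct.induction_on with
    | zero => simp
    | tmul a b => simp [starAddHom]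
    | add x y hx hy => rw [map_add, map_add, hx, hy]
  star_add x y := (starAddHom A B).map_add x y

variable {A B}

lemma star_def (x : A ⊗[ℂ] B) : star x = starAddHom A B x := rfl

@[simp] lemma star_tmul (a : A) (b : B) :
    star (a ⊗ₜ[ℂ] b) = (star a) ⊗ₜ[ℂ] (star b) := by
  simp [star_def, starAddHom]

variable (A B)

instance : StarModule ℂ (A ⊗[ℂ] B) where
  star_smul c x := by
    induction x using TensorProduct.induction_on with
    | zero => rw [smul_zero, star_def, map_zero, smul_zero]
    | tmul a b => rw [TensorProduct.smul_tmul', star_tmul, star_tmul, star_smul,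
        TensorProduct.smul_tmul']
    | add x y hx hy => first
      | (rw [smul_add, star_add, star_add, hx, hy, smul_add])
      | (rw [smul_add, star_def, star_def, map_add, map_add, ← star_def, ← star_def, ← star_def,
          ← star_def, hx, hy, smul_add])
      | (erw [smul_add, star_add, star_add, hx, hy, smul_add])

end StarTensor

/-! ### Finite Hopf C*-algebras -/

/-- A finite Hopf C*-algebra structure on a finite-dimensional C*-algebra `A`:
a comultiplication, counit and antipode satisfying the Hopf algebra axioms,
such that the comultiplication and counit are *-homomorphisms and the antipode
satisfies `S(S(a)*)* = a` (and consequently `S² = id`). -/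
structure FiniteHopfCStar (A : Type*) [NormedRing A] [StarRing A] [CStarRing A]
    [NormedAlgebra ℂ A] [StarModule ℂ A] [FiniteDimensional ℂ A] where
  /-- The comultiplication. -/
  comul : A →ₗ[ℂ] A ⊗[ℂ] A
  /-- The counit. -/
  counit : A →ₗ[ℂ] ℂ
  /-- The antipode. -/
  antipode : A →ₗ[ℂ] A
  coassoc : ∀ a : A,
    (TensorProduct.assoc ℂ A A A) (LinearMap.rTensor A comul (comul a)) =
      LinearMap.lTensor A comul (comul a)
  counit_comul : ∀ a : A, (TensorProduct.lid ℂ A) (LinearMap.rTensor A counit (comul a)) = a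
  comul_counit : ∀ a : A, (TensorProduct.rid ℂ A) (LinearMap.lTensor A counit (comul a)) = a
  comul_one : comul 1 = 1
  comul_mul : ∀ a b : A, comul (a * b) = comul a * comul b
  counit_one : counit 1 = 1
  counit_mul : ∀ a b : A, counit (a * b) = counit a * counit b
  comul_star : ∀ a : A, comul (star a) = star (comul a)
  counit_star : ∀ a : A, counit (star a) = star (counit a)
  mul_antipode_rTensor_comul : ∀ a : A,
    LinearMap.mul' ℂ A (LinearMap.rTensor A antipode (comul a)) = counit a • 1
  mul_antipode_lTensor_comul : ∀ a : A,
    LinearMap.mul' ℂ A (LinearMap.lTensor A antipode (comul a)) = counit a • 1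
  star_antipode_star_antipode : ∀ a : A, star (antipode (star (antipode a))) = a
  antipode_antipode : ∀ a : A, antipode (antipode a) = a

/-! ### Pairings -/

section Pairing

variable {A B : Type*} [AddCommGroup A] [AddCommGroup B] [Module ℂ A] [Module ℂ B]

/-- The extension of a bilinear pairing `A × B → ℂ` to `(A ⊗ A) × (B ⊗ B) → ℂ`,
`⟨a₁ ⊗ a₂, b₁ ⊗ b₂⟩ = ⟨a₁, b₁⟩ ⟨a₂, b₂⟩`. -/
def pairT (p : A →ₗ[ℂ] B →ₗ[ℂ] ℂ) :
    A ⊗[ℂ] A →ₗ[ℂ] Module.Dual ℂ (B ⊗[ℂ] B) :=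
  TensorProduct.dualDistrib ℂ B B ∘ₗ TensorProduct.map p p

/-- Non-degeneracy of a bilinear pairing. -/
def Nondegenerate (p : A →ₗ[ℂ] B →ₗ[ℂ] ℂ) : Prop :=
  (∀ a : A, (∀ b : B, p a b = 0) → a = 0) ∧ (∀ b : B, (∀ a : A, p a b = 0) → b = 0)

end Pairing

section Main

variable {A B : Type*}
  [NormedRing A] [StarRing A] [CStarRing A] [NormedAlgebra ℂ A] [StarModule ℂ A]
  [FiniteDimensional ℂ A]
  [NormedRing B] [StarRing B] [CStarRing B] [NormedAlgebra ℂ B] [StarModule ℂ B]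
  [FiniteDimensional ℂ B]

variable (hA : FiniteHopfCStar A) (hB : FiniteHopfCStar B) (p : A →ₗ[ℂ] B →ₗ[ℂ] ℂ)

/-- A pairing of finite Hopf C*-algebras. -/
structure IsHopfPairing : Prop where
  pair_comul : ∀ (a : A) (b₁ b₂ : B), pairT p (hA.comul a) (b₁ ⊗ₜ[ℂ] b₂) = p a (b₁ * b₂)
  pair_mul : ∀ (a₁ a₂ : A) (b : B), pairT p.flip (hB.comul b) (a₁ ⊗ₜ[ℂ] a₂) = p (a₁ * a₂) b
  pair_star : ∀ (a : A) (b : B), p (star a) b = starRingEnd ℂ (p a (star (hB.antipode b)))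
  pair_one_right : ∀ a : A, p a 1 = hA.counit a
  pair_one_left : ∀ b : B, p 1 b = hB.counit b
  pair_antipode : ∀ (a : A) (b : B), p (hA.antipode a) b = p a (hB.antipode b)

/-- `a ▷ b = Σ b₍₁₎ ⟨a, b₍₂₎⟩`, the left action of `A` on `B`. -/
def lact (a : A) (b : B) : B :=
  TensorProduct.rid ℂ B ((LinearMap.lTensor B (p a)) (hB.comul b))

/-- `b ◁ a = Σ ⟨a, b₍₁₎⟩ b₍₂₎`, the right action of `A` on `B`. -/
def ract (b : B) (a : A) : B :=
  TensorProduct.lid ℂ B ((LinearMap.rTensor B (p a)) (hB.comul b))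

/-- `b ▷ a = Σ a₍₁₎ ⟨a₍₂₎, b⟩`, the left action of `B` on `A`. -/
def lact' (b : B) (a : A) : A :=
  TensorProduct.rid ℂ A ((LinearMap.lTensor A (p.flip b)) (hA.comul a))

/-- `a ◁ b = Σ ⟨a₍₁₎, b⟩ a₍₂₎`, the right action of `B` on `A`. -/
def ract' (a : A) (b : B) : A :=
  TensorProduct.lid ℂ A ((LinearMap.rTensor A (p.flip b)) (hA.comul a))

end Main

end QD

namespace QD

section Triples

variable {X : Type*} [NormedRing X] [StarRing X] [CStarRing X] [NormedAlgebra ℂ X]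
  [StarModule ℂ X] [FiniteDimensional ℂ X]

/-- The iterated comultiplication `x ↦ Σ x₍₁₎ ⊗ (x₍₂₎ ⊗ x₍₃₎)`. -/
def comul3 (h : FiniteHopfCStar X) : X →ₗ[ℂ] X ⊗[ℂ] (X ⊗[ℂ] X) :=
  LinearMap.lTensor X h.comul ∘ₗ h.comul

end Triples

section Rot

variable (X : Type*) [AddCommGroup X] [Module ℂ X]

/-- The rearrangement `x₁ ⊗ (x₂ ⊗ x₃) ↦ (x₃ ⊗ x₁) ⊗ x₂`. -/
def rot31 : X ⊗[ℂ] (X ⊗[ℂ] X) →ₗ[ℂ] (X ⊗[ℂ] X) ⊗[ℂ] X :=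
  (TensorProduct.comm ℂ X (X ⊗[ℂ] X)).toLinearMap
    ∘ₗ (TensorProduct.assoc ℂ X X X).toLinearMap
    ∘ₗ (TensorProduct.comm ℂ X (X ⊗[ℂ] X)).toLinearMap

/-- The rearrangement `x₁ ⊗ (x₂ ⊗ x₃) ↦ (x₁ ⊗ x₃) ⊗ x₂`. -/
def rot13 : X ⊗[ℂ] (X ⊗[ℂ] X) →ₗ[ℂ] (X ⊗[ℂ] X) ⊗[ℂ] X :=
  (TensorProduct.assoc ℂ X X X).symm.toLinearMap
    ∘ₗ LinearMap.lTensor X (TensorProduct.comm ℂ X X).toLinearMap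

/-- Collapsing scalar factors `(c₁ ⊗ c₂) ⊗ m ↦ (c₁ * c₂) • m`. -/
def collapse : (ℂ ⊗[ℂ] ℂ) ⊗[ℂ] X →ₗ[ℂ] X :=
  (TensorProduct.lid ℂ X).toLinearMap
    ∘ₗ LinearMap.rTensor X (TensorProduct.lid ℂ ℂ).toLinearMap

end Rot

section Double

variable {A B : Type*}
  [NormedRing A] [StarRing A] [CStarRing A] [NormedAlgebra ℂ A] [StarModule ℂ A]
  [FiniteDimensional ℂ A]
  [NormedRing B] [StarRing B] [CStarRing B] [NormedAlgebra ℂ B] [StarModule ℂ B]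
  [FiniteDimensional ℂ B]

variable (hA : FiniteHopfCStar A) (hB : FiniteHopfCStar B) (p : A →ₗ[ℂ] B →ₗ[ℂ] ℂ)

/-- Contraction `((b₃ ⊗ b₁) ⊗ b₂) ⊗ ((a₁ ⊗ a₃) ⊗ a₂) ↦ ⟨a₁, S_B b₃⟩ ⟨a₃, b₁⟩ (a₂ ⊗ b₂)`. -/
def mulAux : ((B ⊗[ℂ] B) ⊗[ℂ] B) ⊗[ℂ] ((A ⊗[ℂ] A) ⊗[ℂ] A) →ₗ[ℂ] A ⊗[ℂ] B :=
  collapse (A ⊗[ℂ] B)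
    ∘ₗ TensorProduct.map
        (TensorProduct.map (TensorProduct.lift (p.flip ∘ₗ hB.antipode))
          (TensorProduct.lift p.flip))
        (TensorProduct.comm ℂ B A).toLinearMap
    ∘ₗ LinearMap.rTensor (B ⊗[ℂ] A)
        (TensorProduct.tensorTensorTensorComm ℂ B B A A).toLinearMap
    ∘ₗ (TensorProduct.tensorTensorTensorComm ℂ (B ⊗[ℂ] B) B (A ⊗[ℂ] A) A).toLinearMap

/-- The middle part of the quantum double multiplication:
`b ⊗ a' ↦ Σ ⟨a'₍₁₎, S_B⁻¹ b₍₃₎⟩ ⟨a'₍₃₎, b₍₁₎⟩ (a'₍₂₎ ⊗ b₍₂₎)` (recall `S_B⁻¹ = S_B`). -/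
def mdMid : B ⊗[ℂ] A →ₗ[ℂ] A ⊗[ℂ] B :=
  mulAux hB p ∘ₗ
    TensorProduct.map (rot31 B ∘ₗ comul3 hB) (rot13 A ∘ₗ comul3 hA)

/-- The multiplication of the quantum double `D(A,B)`:
`(a ⊗ b) (a' ⊗ b') = Σ ⟨a'₍₁₎, S_B⁻¹ b₍₃₎⟩ ⟨a'₍₃₎, b₍₁₎⟩ (a a'₍₂₎ ⊗ b₍₂₎ b')`. -/
def mD : (A ⊗[ℂ] B) ⊗[ℂ] (A ⊗[ℂ] B) →ₗ[ℂ] A ⊗[ℂ] B :=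
  (LinearMap.mul' ℂ (A ⊗[ℂ] B) ∘ₗ
      LinearMap.rTensor (A ⊗[ℂ] B)
        (Algebra.TensorProduct.includeLeft : A →ₐ[ℂ] A ⊗[ℂ] B).toLinearMap)
    ∘ₗ LinearMap.lTensor A
        ((LinearMap.mul' ℂ (A ⊗[ℂ] B) ∘ₗ
            LinearMap.lTensor (A ⊗[ℂ] B)
              (Algebra.TensorProduct.includeRight : B →ₐ[ℂ] A ⊗[ℂ] B).toLinearMap)
          ∘ₗ LinearMap.rTensor B (mdMid hA hB p))
    ∘ₗ LinearMap.lTensor A (TensorProduct.assoc ℂ B A B).symm.toLinearMap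
    ∘ₗ (TensorProduct.assoc ℂ A B (A ⊗[ℂ] B)).toLinearMap

/-- The comultiplication of the quantum double. -/
def ΔD : A ⊗[ℂ] B →ₗ[ℂ] (A ⊗[ℂ] B) ⊗[ℂ] (A ⊗[ℂ] B) :=
  (TensorProduct.tensorTensorTensorComm ℂ A A B B).toLinearMap
    ∘ₗ TensorProduct.map hA.comul hB.comul

/-- The tensor product of two linear functionals, as a functional on the tensor product. -/
def funcT (φA : A →ₗ[ℂ] ℂ) (φB : B →ₗ[ℂ] ℂ) : A ⊗[ℂ] B →ₗ[ℂ] ℂ :=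
  (TensorProduct.lid ℂ ℂ).toLinearMap ∘ₗ TensorProduct.map φA φB

/-- The counit of the quantum double. -/
def εD : A ⊗[ℂ] B →ₗ[ℂ] ℂ := funcT hA.counit hB.counit

/-- The antipode of the quantum double:
`S_D (a ⊗ b) = Σ ⟨a₍₁₎, S_B b₍₃₎⟩ ⟨a₍₃₎, b₍₁₎⟩ (S_A a₍₂₎ ⊗ S_B b₍₂₎)`. -/
def SD : A ⊗[ℂ] B →ₗ[ℂ] A ⊗[ℂ] B :=
  TensorProduct.map hA.antipode hB.antipode ∘ₗ mdMid hA hB p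
    ∘ₗ (TensorProduct.comm ℂ A B).toLinearMap

/-- Contraction `(u₁ ⊗ (u₂ ⊗ u₃)) ⊗ (v₁ ⊗ (v₂ ⊗ v₃)) ↦ ⟨u₃, v₁⟩ ⟨u₁, v₃⟩ (u₂ ⊗ v₂)`. -/
def starContract : (A ⊗[ℂ] (A ⊗[ℂ] A)) ⊗[ℂ] (B ⊗[ℂ] (B ⊗[ℂ] B)) →ₗ[ℂ] A ⊗[ℂ] B :=
  collapse (A ⊗[ℂ] B)
    ∘ₗ LinearMap.rTensor (A ⊗[ℂ] B)
        (TensorProduct.map (TensorProduct.lift p) (TensorProduct.lift p))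
    ∘ₗ LinearMap.rTensor (A ⊗[ℂ] B)
        (TensorProduct.tensorTensorTensorComm ℂ A A B B).toLinearMap
    ∘ₗ (TensorProduct.tensorTensorTensorComm ℂ (A ⊗[ℂ] A) A (B ⊗[ℂ] B) B).toLinearMap
    ∘ₗ TensorProduct.map (rot31 A) (rot13 B)

/-- The involution of the quantum double:
`(a ⊗ b)* = Σ ⟨a₍₃₎*, b₍₁₎*⟩ ⟨a₍₁₎*, (S_B b₍₃₎)*⟩ (a₍₂₎* ⊗ b₍₂₎*)`,
extended conjugate-linearly. -/
def starD (x : A ⊗[ℂ] B) : A ⊗[ℂ] B :=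
  starContract p
    (star ((TensorProduct.map (comul3 hA)
        (LinearMap.lTensor B (LinearMap.lTensor B hB.antipode) ∘ₗ comul3 hB)) x))

/-- The composite of `starD` with the componentwise star, a linear map. -/
def starDbar : A ⊗[ℂ] B →ₗ[ℂ] A ⊗[ℂ] B where
  toFun x := star (starD hA hB p x)
  map_add' x y := by
    simp only [starD]
    first
    | (rw [map_add, star_add, map_add, star_add])
    | (simp only [star_def, map_add])
  map_smul' c x := by
    simp only [starD, map_smul, star_smul, RingHom.id_apply, starRingEnd_apply, star_star]

end Double

end QD

namespace QD

section CounitUniqueness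

variable {R C : Type*} [CommSemiring R] [AddCommMonoid C] [Module R C]

lemma rid_lTensor_rTensor_comm (f g : C →ₗ[R] R) (x : C ⊗[R] C) :
    f (TensorProduct.rid R C (LinearMap.lTensor C g x)) =
      g (TensorProduct.lid R C (LinearMap.rTensor C f x)) := by
  induction x using TensorProduct.induction_on with
  | zero => simp only [map_zero]
  | tmul c₁ c₂ =>
    simp only [LinearMap.lTensor_tmul, LinearMap.rTensor_tmul, TensorProduct.rid_tmul,
      TensorProduct.lid_tmul, map_smul, smul_eq_mul, mul_comm]
  | add x y hx hy => simp only [map_add, hx, hy]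

lemma eq_counit_of_rid_lTensor_comul (comul : C →ₗ[R] C ⊗[R] C) (counit q : C →ₗ[R] R)
    (counit_comul : ∀ c, TensorProduct.lid R C (LinearMap.rTensor C counit (comul c)) = c)
    (q_comul : ∀ c, TensorProduct.rid R C (LinearMap.lTensor C q (comul c)) = c) :
    q = counit := by
  ext c
  calc q c = q (TensorProduct.lid R C (LinearMap.rTensor C counit (comul c))) := by
        rw [counit_comul]
    _ = counit (TensorProduct.rid R C (LinearMap.lTensor C q (comul c))) :=
        (rid_lTensor_rTensor_comm counit q (comul c)).symm
    _ = counit c := by rw [q_comul]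

end CounitUniqueness

section PairingCounit

variable {M N : Type*} [AddCommGroup M] [AddCommGroup N] [Module ℂ M] [Module ℂ N]

lemma pairT_tmul_right (p : M →ₗ[ℂ] N →ₗ[ℂ] ℂ) (x : M ⊗[ℂ] M) (n e : N) :
    pairT p x (n ⊗ₜ[ℂ] e) = p (TensorProduct.rid ℂ M (LinearMap.lTensor M (p.flip e) x)) n := by
  induction x using TensorProduct.induction_on with
  | zero => simp only [map_zero, LinearMap.zero_apply]
  | tmul m₁ m₂ =>
    simp only [pairT, LinearMap.comp_apply, TensorProduct.map_tmul,
      TensorProduct.dualDistrib_apply, LinearMap.lTensor_tmul, TensorProduct.rid_tmul,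
      LinearMap.flip_apply, map_smul, LinearMap.smul_apply, smul_eq_mul, mul_comm]
  | add x y hx hy => simp only [map_add, LinearMap.add_apply, hx, hy]

lemma rid_lTensor_flip_comul_eq_self (p : M →ₗ[ℂ] N →ₗ[ℂ] ℂ)
    (hp : ∀ m, (∀ n, p m n = 0) → m = 0) (comul : M →ₗ[ℂ] M ⊗[ℂ] M) (e : N)
    (h : ∀ m n, pairT p (comul m) (n ⊗ₜ[ℂ] e) = p m n) (m : M) :
    TensorProduct.rid ℂ M (LinearMap.lTensor M (p.flip e) (comul m)) = m := by
  rw [← sub_eq_zero]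
  refine hp _ fun n => ?_
  rw [map_sub, LinearMap.sub_apply, ← pairT_tmul_right, h, sub_self]

lemma pair_eq_counit_of_pairT_comul (p : M →ₗ[ℂ] N →ₗ[ℂ] ℂ)
    (hp : ∀ m, (∀ n, p m n = 0) → m = 0) (comul : M →ₗ[ℂ] M ⊗[ℂ] M) (counit : M →ₗ[ℂ] ℂ)
    (counit_comul : ∀ m, TensorProduct.lid ℂ M (LinearMap.rTensor M counit (comul m)) = m)
    (e : N) (h : ∀ m n, pairT p (comul m) (n ⊗ₜ[ℂ] e) = p m n) (m : M) :
    p m e = counit m :=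
  LinearMap.congr_fun (eq_counit_of_rid_lTensor_comul comul counit (p.flip e) counit_comul
    (rid_lTensor_flip_comul_eq_self p hp comul e h)) m

end PairingCounit

variable {A B : Type*}
  [NormedRing A] [StarRing A] [CStarRing A] [NormedAlgebra ℂ A] [StarModule ℂ A]
  [FiniteDimensional ℂ A]
  [NormedRing B] [StarRing B] [CStarRing B] [NormedAlgebra ℂ B] [StarModule ℂ B]
  [FiniteDimensional ℂ B]

theorem stmt_5_general (hA : FiniteHopfCStar A) (hB : FiniteHopfCStar B)
    (p : A →ₗ[ℂ] B →ₗ[ℂ] ℂ) (hnd : Nondegenerate p)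
    (h1 : ∀ (a : A) (b₁ b₂ : B), pairT p (hA.comul a) (b₁ ⊗ₜ[ℂ] b₂) = p a (b₁ * b₂))
    (h2 : ∀ (a₁ a₂ : A) (b : B), pairT p.flip (hB.comul b) (a₁ ⊗ₜ[ℂ] a₂) = p (a₁ * a₂) b) :
    (∀ a : A, p a 1 = hA.counit a) ∧ (∀ b : B, p 1 b = hB.counit b) := by
  constructor
  · refine pair_eq_counit_of_pairT_comul p hnd.1 hA.comul hA.counit hA.counit_comul 1 ?_
    intro a b
    rw [h1, mul_one]
  · refine pair_eq_counit_of_pairT_comul p.flip hnd.2 hB.comul hB.counit hB.counit_comul 1 ?_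
    intro b a
    rw [h2, mul_one, LinearMap.flip_apply]

/-- Remark 2.6 (2), first part: for a non-degenerate bilinear form satisfying the first
three pairing axioms, the counit axioms follow automatically. -/
theorem stmt_5 (hA : FiniteHopfCStar A) (hB : FiniteHopfCStar B)
    (p : A →ₗ[ℂ] B →ₗ[ℂ] ℂ) (hnd : Nondegenerate p)
    (h1 : ∀ (a : A) (b₁ b₂ : B), pairT p (hA.comul a) (b₁ ⊗ₜ[ℂ] b₂) = p a (b₁ * b₂))
    (h2 : ∀ (a₁ a₂ : A) (b : B), pairT p.flip (hB.comul b) (a₁ ⊗ₜ[ℂ] a₂) = p (a₁ * a₂) b)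
    (h3 : ∀ (a : A) (b : B), p (star a) b = starRingEnd ℂ (p a (star (hB.antipode b)))) :
    (∀ a : A, p a 1 = hA.counit a) ∧ (∀ b : B, p 1 b = hB.counit b) :=
  stmt_5_general hA hB p hnd h1 h2

end QD
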